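/- arXiv:2503.12176 — 3 statements merged into one kernel-verified Lean document; each statement's English description precedes it below -/
import Mathlib

section
/- Let φ₁ : ℝⁿ → ℝ ∪ {+∞} and let ψ = φ₂* : ℝⁿ → ℝ ∪ {+∞} be the convex conjugate of a proper function φ₂ (so ψ is convex and lower semicontinuous). Define η(x,y) = φ₁(x)/(⟨x,y⟩ − ψ(y)) on the set where the denominator is positive. Suppose x ∈ dom φ₁, y ∈ dom ψ, φ₁(x) > 0, ⟨x,y⟩ − ψ(y) > ν for some ν > 0, φ₁ is continuous at x relative to dom φ₁, and ψ is calm at y. Then the partial Fréchet subdifferentials of η at (x,y) are given by: ∂̂ₓη(x,y) = [(⟨x,y⟩ − ψ(y))·∂̂φ₁(x) − φ₁(x)·y] / (⟨x,y⟩ − ψ(y))², and ∂̂_yη(x,y) = φ₁(x)·(∂̂ψ(y) − x) / (⟨x,y⟩ − ψ(y))². -/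
open Filter Metric Set RealInnerProductSpace
open scoped Topology Classical

noncomputable section

/-- Convexity for extended-real-valued functions. -/
def ERealConvex {α : Type*} [AddCommGroup α] [Module ℝ α] (f : α → EReal) : Prop :=
  ∀ x y : α, ∀ a b : ℝ, 0 ≤ a → 0 ≤ b → a + b = 1 →
    f (a • x + b • y) ≤ (a : EReal) * f x + (b : EReal) * f y

/-- A proper extended-real-valued function: never `⊥` and finite somewhere. -/
def ERealProper {α : Type*} (f : α → EReal) : Prop :=
  (∀ x, f x ≠ ⊥) ∧ ∃ x, f x ≠ ⊤

/-- Effective domain of an extended-real-valued function. -/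
def edom {α : Type*} (f : α → EReal) : Set α := {x | f x ≠ ⊤}

/-- Convex (Fenchel) conjugate. -/
def econj {α : Type*} [NormedAddCommGroup α] [InnerProductSpace ℝ α]
    (f : α → EReal) (y : α) : EReal :=
  ⨆ z, (((⟪z, y⟫ : ℝ) : EReal) - f z)

/-- Convex subdifferential. -/
def csubdiff {α : Type*} [NormedAddCommGroup α] [InnerProductSpace ℝ α]
    (f : α → EReal) (z : α) : Set α :=
  {v | ∀ w, f z + ((⟪v, w - z⟫ : ℝ) : EReal) ≤ f w}

/-- Normal cone of a convex set. -/
def normalCone {α : Type*} [NormedAddCommGroup α] [InnerProductSpace ℝ α]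
    (S : Set α) (x : α) : Set α :=
  {v | ∀ z ∈ S, ⟪v, z - x⟫ ≤ 0}

/-- Calmness of an extended-real-valued function at a point of its domain. -/
def ECalm {α : Type*} [NormedAddCommGroup α] (f : α → EReal) (y : α) : Prop :=
  f y ≠ ⊤ ∧ ∃ ϱ > (0:ℝ), ∃ ε > (0:ℝ), ∀ y' ∈ Metric.ball y ε,
    f y - ((ϱ * ‖y' - y‖ : ℝ) : EReal) ≤ f y' ∧ f y' ≤ f y + ((ϱ * ‖y' - y‖ : ℝ) : EReal)

/-- Fréchet subdifferential of an extended-real-valued function of one variable. -/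
def fsub {α : Type*} [NormedAddCommGroup α] [InnerProductSpace ℝ α]
    (f : α → EReal) (x : α) : Set α :=
  {v | 0 ≤ Filter.liminf
      (fun z => (f z - f x - ((⟪v, z - x⟫ : ℝ) : EReal)) * (((‖z - x‖)⁻¹ : ℝ) : EReal))
      (𝓝[≠] x)}

/-- Fréchet subdifferential of a function of two (inner-product-space) variables. -/
def fsub2 {α β : Type*} [NormedAddCommGroup α] [InnerProductSpace ℝ α]
    [NormedAddCommGroup β] [InnerProductSpace ℝ β]
    (Φ : α → β → EReal) (a : α) (b : β) : Set (α × β) :=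
  {v | 0 ≤ Filter.liminf
      (fun w : α × β =>
        (Φ w.1 w.2 - Φ a b - ((⟪v.1, w.1 - a⟫ + ⟪v.2, w.2 - b⟫ : ℝ) : EReal)) *
          (((‖w - (a, b)‖)⁻¹ : ℝ) : EReal))
      (𝓝[≠] (a, b))}

/-- Limiting (Mordukhovich) subdifferential of a function of two variables. -/
def lsub2 {α β : Type*} [NormedAddCommGroup α] [InnerProductSpace ℝ α]
    [NormedAddCommGroup β] [InnerProductSpace ℝ β]
    (Φ : α → β → EReal) (a : α) (b : β) : Set (α × β) :=
  {v | ∃ w : ℕ → α × β, ∃ vs : ℕ → α × β,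
      Tendsto w atTop (𝓝 (a, b)) ∧
      Tendsto (fun k => Φ (w k).1 (w k).2) atTop (𝓝 (Φ a b)) ∧
      (∀ k, vs k ∈ fsub2 Φ (w k).1 (w k).2) ∧
      Tendsto vs atTop (𝓝 v)}

/-- Fréchet subdifferential of a function of three variables. -/
def fsub3 {α β γ : Type*} [NormedAddCommGroup α] [InnerProductSpace ℝ α]
    [NormedAddCommGroup β] [InnerProductSpace ℝ β]
    [NormedAddCommGroup γ] [InnerProductSpace ℝ γ]
    (Φ : α → β → γ → EReal) (a : α) (b : β) (c : γ) : Set (α × β × γ) :=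
  {v | 0 ≤ Filter.liminf
      (fun w : α × β × γ =>
        (Φ w.1 w.2.1 w.2.2 - Φ a b c -
          ((⟪v.1, w.1 - a⟫ + ⟪v.2.1, w.2.1 - b⟫ + ⟪v.2.2, w.2.2 - c⟫ : ℝ) : EReal)) *
          (((‖w - (a, b, c)‖)⁻¹ : ℝ) : EReal))
      (𝓝[≠] (a, b, c))}

/-- Limiting (Mordukhovich) subdifferential of a function of three variables. -/
def lsub3 {α β γ : Type*} [NormedAddCommGroup α] [InnerProductSpace ℝ α]
    [NormedAddCommGroup β] [InnerProductSpace ℝ β]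
    [NormedAddCommGroup γ] [InnerProductSpace ℝ γ]
    (Φ : α → β → γ → EReal) (a : α) (b : β) (c : γ) : Set (α × β × γ) :=
  {v | ∃ w : ℕ → α × β × γ, ∃ vs : ℕ → α × β × γ,
      Tendsto w atTop (𝓝 (a, b, c)) ∧
      Tendsto (fun k => Φ (w k).1 (w k).2.1 (w k).2.2) atTop (𝓝 (Φ a b c)) ∧
      (∀ k, vs k ∈ fsub3 Φ (w k).1 (w k).2.1 (w k).2.2) ∧
      Tendsto vs atTop (𝓝 v)}

/-- A polyhedral set: a finite intersection of closed half-spaces. -/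
def IsPolyhedral {α : Type*} [NormedAddCommGroup α] [InnerProductSpace ℝ α]
    (S : Set α) : Prop :=
  ∃ (m : ℕ) (a : Fin m → α) (b : Fin m → ℝ), S = {z | ∀ i, ⟪a i, z⟫ ≤ b i}

/-- The merit function φ(x,u) = g(x) + h(x) + ι_S(x) + (1/(2δ))‖x-u‖². -/
def phiF {n : ℕ} (S : Set (EuclideanSpace ℝ (Fin n)))
    (g : EuclideanSpace ℝ (Fin n) → EReal) (h : EuclideanSpace ℝ (Fin n) → ℝ) (δ : ℝ)
    (x u : EuclideanSpace ℝ (Fin n)) : EReal :=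
  g x + ((h x : ℝ) : EReal) + (if x ∈ S then (0 : EReal) else ⊤)
    + (((2 * δ)⁻¹ * ‖x - u‖ ^ 2 : ℝ) : EReal)

/-- ϑ(x,u) = φ(x,u)/f(Kx). -/
def varthetaF {n p : ℕ} (S : Set (EuclideanSpace ℝ (Fin n)))
    (g : EuclideanSpace ℝ (Fin n) → EReal) (h : EuclideanSpace ℝ (Fin n) → ℝ)
    (f : EuclideanSpace ℝ (Fin p) → EReal)
    (K : EuclideanSpace ℝ (Fin n) →ₗ[ℝ] EuclideanSpace ℝ (Fin p)) (δ : ℝ)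
    (x u : EuclideanSpace ℝ (Fin n)) : EReal :=
  phiF S g h δ x u / f (K x)

/-- ϖ(x,y,u) = φ(x,u)/(⟨Kx,y⟩ - f*(y)). -/
def varpiF {n p : ℕ} (S : Set (EuclideanSpace ℝ (Fin n)))
    (g : EuclideanSpace ℝ (Fin n) → EReal) (h : EuclideanSpace ℝ (Fin n) → ℝ)
    (f : EuclideanSpace ℝ (Fin p) → EReal)
    (K : EuclideanSpace ℝ (Fin n) →ₗ[ℝ] EuclideanSpace ℝ (Fin p)) (δ : ℝ)
    (x : EuclideanSpace ℝ (Fin n)) (y : EuclideanSpace ℝ (Fin p))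
    (u : EuclideanSpace ℝ (Fin n)) : EReal :=
  phiF S g h δ x u / (((⟪K x, y⟫ : ℝ) : EReal) - econj f y)

/-!
Near the base point, the difference quotient of `η` is a factor with a positive limit times the
difference quotient of `φ₁` (in `x`) or of `ψ` (in `y`), plus a remainder tending to `0`; such a
factor and remainder do not affect whether the liminf is nonnegative. In `x` the denominator
`⟪t, y⟫ - ψ y` is affine, so the remainder is quadratic in `t - x`. In `y` the denominator
`⟪x, s⟫ - ψ s` is continuous because a calm function is, and the remainder is a bounded factor
times `ψ s - ψ y - ⟪x, s - y⟫ → 0`. The maps `v ↦ w` in both formulas are affine bijections.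
-/

namespace EReal

variable {α : Type*} {l : Filter α}

theorem zero_le_liminf_iff_forall_eventually {f : α → EReal} :
    0 ≤ liminf f l ↔ ∀ ε : ℝ, 0 < ε → ∀ᶠ t in l, ((-ε : ℝ) : EReal) < f t := by
  refine ⟨fun h ε hε => eventually_lt_of_lt_liminf (h.trans_lt' (by simpa using hε)),
    fun h => (le_liminf_iff).2 fun z hz => ?_⟩
  obtain ⟨r, hzr, hr⟩ := EReal.exists_between_coe_real hz
  filter_upwards [h (-r) (by simpa using hr)] with t ht
  exact hzr.trans (by simpa using ht)

theorem zero_le_liminf_of_eventually_eq_mul_add {P Q : α → EReal} {a e : α → ℝ} {a₀ : ℝ}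
    (ha : Tendsto a l (𝓝 a₀)) (ha₀ : 0 < a₀) (he : Tendsto e l (𝓝 0))
    (hPQ : ∀ᶠ t in l, P t = a t * Q t + e t) (hQ : 0 ≤ liminf Q l) : 0 ≤ liminf P l := by
  rw [zero_le_liminf_iff_forall_eventually] at hQ ⊢
  intro ε hε
  obtain ⟨δ, hδ, hεδ⟩ : ∃ δ > 0, ε = δ * (a₀ + 2) := ⟨ε / (a₀ + 2), by positivity, by field_simp⟩
  filter_upwards [hPQ, hQ δ hδ, ha.eventually (lt_mem_nhds ha₀),
    ha.eventually (gt_mem_nhds (lt_add_one a₀)), he.eventually (lt_mem_nhds (neg_lt_zero.2 hδ))]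
    with t hP hQt ha_pos ha_lt he_gt
  rw [hP]
  generalize Q t = q at hQt
  induction q using EReal.rec with
  | bot => simp at hQt
  | top => simpa [coe_mul_top_of_pos ha_pos] using coe_lt_top (-ε)
  | coe q =>
    norm_cast at hQt ⊢
    nlinarith [mul_pos ha_pos (show 0 < q + δ by linarith)]

theorem zero_le_liminf_iff_of_eventually_eq_mul_add {P Q : α → EReal} {a e : α → ℝ} {a₀ : ℝ}
    (ha : Tendsto a l (𝓝 a₀)) (ha₀ : 0 < a₀) (he : Tendsto e l (𝓝 0))
    (hPQ : ∀ᶠ t in l, P t = a t * Q t + e t) : 0 ≤ liminf P l ↔ 0 ≤ liminf Q l := by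
  -- conversely `Q = a⁻¹ * P + (-e / a)`
  refine ⟨zero_le_liminf_of_eventually_eq_mul_add (ha.inv₀ ha₀.ne') (inv_pos.2 ha₀)
    (by simpa using (he.div ha ha₀.ne').neg) ?_,
    zero_le_liminf_of_eventually_eq_mul_add ha ha₀ he hPQ⟩
  filter_upwards [hPQ, ha.eventually (lt_mem_nhds ha₀)] with t hP ha_pos
  rw [hP]
  induction Q t using EReal.rec with
  | bot => simp [coe_mul_bot_of_pos, ha_pos]
  | top => simp [coe_mul_top_of_pos, ha_pos]
  | coe q =>
    norm_cast
    field_simp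
    ring

end EReal

theorem ECalm.continuousAt {F : Type*} [NormedAddCommGroup F] {f : F → EReal} {y : F}
    (h : ECalm f y) : ContinuousAt f y := by
  obtain ⟨hy, ϱ, -, ε, hε, hf⟩ := h
  unfold ContinuousAt
  generalize f y = a at hy hf
  induction a using EReal.rec with
  | bot =>
    refine tendsto_const_nhds.congr' ?_
    filter_upwards [ball_mem_nhds y hε] with y' hy'
    exact (le_bot_iff.1 (by simpa using (hf y' hy').2)).symm
  | top => exact absurd rfl hy
  | coe a =>
    have hr : Tendsto (fun y' => ϱ * ‖y' - y‖) (𝓝 y) (𝓝 0) := by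
      simpa using Continuous.tendsto (f := fun y' => ϱ * ‖y' - y‖) (by fun_prop) y
    refine tendsto_of_tendsto_of_tendsto_of_le_of_le'
      (EReal.tendsto_coe.2 (by simpa using (tendsto_const_nhds (x := a)).sub hr))
      (EReal.tendsto_coe.2 (by simpa using (tendsto_const_nhds (x := a)).add hr))
      (eventually_of_mem (ball_mem_nhds y hε) fun y' hy' => ?_)
      (eventually_of_mem (ball_mem_nhds y hε) fun y' hy' => ?_)
    · simpa using (hf y' hy').1
    · simpa using (hf y' hy').2

section InnerProductSpace

variable {α E : Type*} [NormedAddCommGroup E] [InnerProductSpace ℝ E]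

theorem Filter.Tendsto.mul_inner_div_norm {l : Filter α} {g : α → ℝ} (hg : Tendsto g l (𝓝 0))
    (u : E) (z : α → E) : Tendsto (fun t => g t * (⟪u, z t⟫ / ‖z t‖)) l (𝓝 0) := by
  refine hg.zero_mul_isBoundedUnder_le (isBoundedUnder_of ⟨‖u‖, fun t => ?_⟩)
  rw [Function.comp_apply, Real.norm_eq_abs, abs_div, abs_norm]
  exact div_le_of_le_mul₀ (norm_nonneg _) (norm_nonneg _) (abs_real_inner_le_norm _ _)

theorem econj_ne_bot {f : E → EReal} (hf : ∃ z, f z ≠ ⊤) (y : E) : econj f y ≠ ⊥ := by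
  obtain ⟨z, hz⟩ := hf
  refine ne_bot_of_le_ne_bot ?_ (le_iSup (fun z => ((⟪z, y⟫ : ℝ) : EReal) - f z) z)
  simp [sub_eq_add_neg, EReal.add_eq_bot_iff, EReal.neg_eq_bot_iff, hz]

theorem mem_fsub_div_inner_sub_iff {f : E → EReal} {x : E} {A : ℝ} (hfx : f x = A) {y : E}
    {b : ℝ} (hD : 0 < ⟪x, y⟫ - b) (v : E) :
    ((⟪x, y⟫ - b) ^ 2)⁻¹ • ((⟪x, y⟫ - b) • v - A • y) ∈
      fsub (fun t => f t / (((⟪t, y⟫ : ℝ) : EReal) - b)) x ↔ v ∈ fsub f x := by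
  set D := ⟪x, y⟫ - b
  have hd : Tendsto (fun t => ⟪t, y⟫ - b) (𝓝[≠] x) (𝓝 D) :=
    (Continuous.tendsto (by fun_prop) x).mono_left nhdsWithin_le_nhds
  have hg : Tendsto (fun t => (A * ⟪t - x, y⟫ / D - ⟪v, t - x⟫) / ((⟪t, y⟫ - b) * D))
      (𝓝[≠] x) (𝓝 0) := by
    have hnum : Tendsto (fun t => A * ⟪t - x, y⟫ / D - ⟪v, t - x⟫) (𝓝[≠] x) (𝓝 0) := by
      simpa using (Continuous.tendsto (f := fun t => A * ⟪t - x, y⟫ / D - ⟪v, t - x⟫)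
        (by fun_prop) x).mono_left nhdsWithin_le_nhds
    rw [← zero_div (D * D)]
    exact hnum.div (hd.mul_const D) (by positivity)
  simp only [fsub, Set.mem_ofPred_eq, hfx]
  refine EReal.zero_le_liminf_iff_of_eventually_eq_mul_add (a := fun t => (⟪t, y⟫ - b)⁻¹)
    (hd.inv₀ hD.ne') (inv_pos.2 hD) (hg.mul_inner_div_norm y (· - x)) ?_
  filter_upwards [self_mem_nhdsWithin, hd.eventually (lt_mem_nhds hD)] with t (ht : t ≠ x) hdt
  have hr : 0 < ‖t - x‖ := by simpa [sub_eq_zero] using ht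
  rw [← EReal.coe_sub, ← EReal.coe_sub ⟪x, y⟫, ← EReal.coe_div A]
  generalize f t = z
  induction z using EReal.rec with
  | bot =>
    simp only [EReal.bot_div_of_pos_ne_top (EReal.coe_pos.2 hdt) (EReal.coe_ne_top _),
      EReal.bot_sub, EReal.bot_mul_coe_of_pos (inv_pos.2 hr),
      EReal.coe_mul_bot_of_pos (inv_pos.2 hdt), EReal.bot_add]
  | top =>
    simp only [EReal.top_div_of_pos_ne_top (EReal.coe_pos.2 hdt) (EReal.coe_ne_top _),
      EReal.top_sub_coe, EReal.top_mul_coe_of_pos (inv_pos.2 hr),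
      EReal.coe_mul_top_of_pos (inv_pos.2 hdt), EReal.top_add_coe]
  | coe p =>
    have hD' : ⟪x, y⟫ - b ≠ 0 := hD.ne'
    rw [← EReal.coe_div]
    norm_cast
    simp only [D, inner_sub_left, inner_sub_right, real_inner_smul_left, real_inner_comm x y,
      real_inner_comm t y]
    field_simp
    ring

theorem mem_fsub_const_div_inner_sub_iff {ψ : E → EReal} {y : E} {c : ℝ} (hψy : ψ y = c)
    (hψ : ContinuousAt ψ y) {x : E} {A : ℝ} (hA : 0 < A) (hD : 0 < ⟪x, y⟫ - c) (v : E) :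
    ((⟪x, y⟫ - c) ^ 2)⁻¹ • (A • (v - x)) ∈
      fsub (fun s => (A : EReal) / (((⟪x, s⟫ : ℝ) : EReal) - ψ s)) y ↔ v ∈ fsub ψ y := by
  set D := ⟪x, y⟫ - c
  set p := fun s => (ψ s).toReal
  have hψp : ∀ᶠ s in 𝓝 y, ψ s = p s := by
    filter_upwards [hψ.eventually_ne (hψy ▸ EReal.coe_ne_top c),
      hψ.eventually_ne (hψy ▸ EReal.coe_ne_bot c)] with s h_top h_bot
    exact (EReal.coe_toReal h_top h_bot).symm
  have hp : Tendsto p (𝓝[≠] y) (𝓝 c) := by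
    have := (EReal.tendsto_toReal (hψy ▸ EReal.coe_ne_top c) (hψy ▸ EReal.coe_ne_bot c)).comp hψ
    rw [hψy, EReal.toReal_coe] at this
    exact this.mono_left nhdsWithin_le_nhds
  have hinner : Tendsto (fun s => ⟪x, s⟫) (𝓝[≠] y) (𝓝 ⟪x, y⟫) :=
    (Continuous.tendsto (by fun_prop) y).mono_left nhdsWithin_le_nhds
  have hd : Tendsto (fun s => ⟪x, s⟫ - p s) (𝓝[≠] y) (𝓝 D) := hinner.sub hp
  have hg : Tendsto (fun s => A / ((⟪x, s⟫ - p s) * D ^ 2) * (p s - c - ⟪x, s - y⟫))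
      (𝓝[≠] y) (𝓝 0) := by
    have hnum : Tendsto (fun s => p s - c - ⟪x, s - y⟫) (𝓝[≠] y) (𝓝 0) := by
      simpa [inner_sub_right] using (hp.sub_const c).sub (hinner.sub_const ⟪x, y⟫)
    rw [← mul_zero (A / (D * D ^ 2))]
    exact (tendsto_const_nhds.div (hd.mul_const _) (by positivity)).mul hnum
  simp only [fsub, Set.mem_ofPred_eq]
  refine EReal.zero_le_liminf_iff_of_eventually_eq_mul_add
    (a := fun s => A / ((⟪x, s⟫ - p s) * D))
    (tendsto_const_nhds.div (hd.mul_const D) (by positivity)) (by positivity)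
    (hg.mul_inner_div_norm (v - x) (· - y)) ?_
  filter_upwards [self_mem_nhdsWithin, nhdsWithin_le_nhds hψp, hd.eventually (lt_mem_nhds hD)]
    with s (hs : s ≠ y) hψs hds
  have hr : ‖s - y‖ ≠ 0 := by simpa [sub_eq_zero] using hs
  have hD' : ⟪x, y⟫ - c ≠ 0 := hD.ne'
  rw [hψs, hψy, ← EReal.coe_sub, ← EReal.coe_sub, ← EReal.coe_div, ← EReal.coe_div]
  norm_cast
  simp only [D, inner_sub_left, inner_sub_right, real_inner_smul_left]
  field_simp
  ring

end InnerProductSpace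

theorem Function.Surjective.eq_setOf_exists_of_forall_mem_iff {β γ : Type*} {T : β → γ}
    (hT : Function.Surjective T) {S : Set γ} {V : Set β} (h : ∀ v, T v ∈ S ↔ v ∈ V) :
    S = {w | ∃ v ∈ V, w = T v} := by
  ext w
  obtain ⟨v, rfl⟩ := hT w
  refine ⟨fun hv => ⟨v, (h v).1 hv, rfl⟩, ?_⟩
  rintro ⟨u, hu, hvu⟩
  exact hvu ▸ (h u).2 hu

theorem stmt0_general {n : ℕ}
    (φ₁ φ₂ ψ : EuclideanSpace ℝ (Fin n) → EReal)
    (hφ₂P : ERealProper φ₂)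
    (hψ : ψ = econj φ₂)
    (x y : EuclideanSpace ℝ (Fin n))
    (hx : φ₁ x ≠ ⊤) (hy : ψ y ≠ ⊤)
    (hφ₁pos : (0 : EReal) < φ₁ x)
    (ν : ℝ) (hν : 0 < ν)
    (hden : (ν : EReal) < ((⟪x, y⟫ : ℝ) : EReal) - ψ y)
    (hcalm : ECalm ψ y) :
    (fsub (fun t => φ₁ t / (((⟪t, y⟫ : ℝ) : EReal) - ψ y)) x
      = {w | ∃ v ∈ fsub φ₁ x,
          w = (((((⟪x, y⟫ : ℝ) : EReal) - ψ y).toReal ^ 2)⁻¹) •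
            (((((⟪x, y⟫ : ℝ) : EReal) - ψ y).toReal) • v - (φ₁ x).toReal • y)})
    ∧ (fsub (fun s => φ₁ x / (((⟪x, s⟫ : ℝ) : EReal) - ψ s)) y
      = {w | ∃ v ∈ fsub ψ y,
          w = (((((⟪x, y⟫ : ℝ) : EReal) - ψ y).toReal ^ 2)⁻¹) •
            ((φ₁ x).toReal • (v - x))}) := by
  obtain ⟨A, hA⟩ : ∃ A : ℝ, φ₁ x = A := ⟨_, (EReal.coe_toReal hx (ne_bot_of_gt hφ₁pos)).symm⟩
  obtain ⟨c, hc⟩ : ∃ c : ℝ, ψ y = c :=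
    ⟨_, (EReal.coe_toReal hy (hψ ▸ econj_ne_bot hφ₂P.2 y)).symm⟩
  have hA_pos : 0 < A := EReal.coe_pos.1 (hA ▸ hφ₁pos)
  have hD : 0 < ⟪x, y⟫ - c := by
    rw [hc, ← EReal.coe_sub] at hden
    exact hν.trans (EReal.coe_lt_coe_iff.1 hden)
  have hDr : (((⟪x, y⟫ : ℝ) : EReal) - ψ y).toReal = ⟪x, y⟫ - c := by
    rw [hc, ← EReal.coe_sub, EReal.toReal_coe]
  rw [hDr, hA, EReal.toReal_coe, hc]
  refine ⟨Function.Surjective.eq_setOf_exists_of_forall_mem_iff (fun w => ?_)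
      (mem_fsub_div_inner_sub_iff hA hD),
    Function.Surjective.eq_setOf_exists_of_forall_mem_iff (fun w => ?_)
      (mem_fsub_const_div_inner_sub_iff hc hcalm.continuousAt hA_pos hD)⟩
  · refine ⟨(⟪x, y⟫ - c) • w + (A / (⟪x, y⟫ - c)) • y, ?_⟩
    match_scalars <;> field_simp
    ring
  · refine ⟨x + ((⟪x, y⟫ - c) ^ 2 / A) • w, ?_⟩
    match_scalars <;> field_simp
    ring

theorem stmt0 {n : ℕ}
    (φ₁ φ₂ ψ : EuclideanSpace ℝ (Fin n) → EReal)
    (hφ₁bot : ∀ z, φ₁ z ≠ ⊥)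
    (hφ₂P : ERealProper φ₂)
    (hψ : ψ = econj φ₂)
    (x y : EuclideanSpace ℝ (Fin n))
    (hx : φ₁ x ≠ ⊤) (hy : ψ y ≠ ⊤)
    (hφ₁pos : (0 : EReal) < φ₁ x)
    (ν : ℝ) (hν : 0 < ν)
    (hden : (ν : EReal) < ((⟪x, y⟫ : ℝ) : EReal) - ψ y)
    (hcont : ContinuousWithinAt φ₁ (edom φ₁) x)
    (hcalm : ECalm ψ y) :
    (fsub (fun t => φ₁ t / (((⟪t, y⟫ : ℝ) : EReal) - ψ y)) x
      = {w | ∃ v ∈ fsub φ₁ x,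
          w = (((((⟪x, y⟫ : ℝ) : EReal) - ψ y).toReal ^ 2)⁻¹) •
            (((((⟪x, y⟫ : ℝ) : EReal) - ψ y).toReal) • v - (φ₁ x).toReal • y)})
    ∧ (fsub (fun s => φ₁ x / (((⟪x, s⟫ : ℝ) : EReal) - ψ s)) y
      = {w | ∃ v ∈ fsub ψ y,
          w = (((((⟪x, y⟫ : ℝ) : EReal) - ψ y).toReal ^ 2)⁻¹) •
            ((φ₁ x).toReal • (v - x))}) :=
  stmt0_general φ₁ φ₂ ψ hφ₂P hψ x y hx hy hφ₁pos ν hν hden hcalm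
end
end

section
/- Let the sequences (xᵏ, yᵏ, uᵏ, θ_k) be generated by the FPSA iteration. Then for every k, φ(xᵏ⁺¹, uᵏ) + θ_k·[f(Kxᵏ) − (⟨Kxᵏ⁺¹, yᵏ⁺¹⟩ − f*(yᵏ⁺¹))] ≤ φ(xᵏ, uᵏ) − ((1/δ − L_{∇h})/2)·‖xᵏ⁺¹ − xᵏ‖². -/
open Filter Metric Set RealInnerProductSpace
open scoped Topology Classical

noncomputable section

/-! The `x`-update is a proximal step for the convex function `g` on the convex set `S`. Comparing
the minimiser with the points of the segment towards `xᵏ` and letting them tend to `xᵏ⁺¹` gives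
the three-point inequality, which produces the linear term
`⟪∇h(xᵏ) - θ_k Kᵀyᵏ⁺¹, xᵏ⁺¹ - xᵏ⟫`. The descent lemma for `h` trades its gradient part for
`h(xᵏ⁺¹) - h(xᵏ)` at the cost `(L/2)‖xᵏ⁺¹ - xᵏ‖²`, and since `yᵏ⁺¹ ∈ ∂f(Kxᵏ)` the Fenchel–Young
equality `f(Kxᵏ) + f*(yᵏ⁺¹) = ⟪Kxᵏ, yᵏ⁺¹⟫` turns the remaining part into the `θ_k` term. -/

theorem econj_eq_of_mem_csubdiff {α : Type*} [NormedAddCommGroup α] [InnerProductSpace ℝ α]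
    {f : α → EReal} {z y : α} {F : ℝ} (hz : f z = F) (hy : y ∈ csubdiff f z) :
    econj f y = ((⟪z, y⟫ - F : ℝ) : EReal) := by
  refine le_antisymm (iSup_le fun w => ?_) ?_
  · have hw := hy w
    rw [hz] at hw
    induction hfw : f w with
    | bot => rw [hfw] at hw; simp at hw
    | top => simp
    | coe r =>
      rw [hfw, ← EReal.coe_add, EReal.coe_le_coe_iff] at hw
      rw [← EReal.coe_sub, EReal.coe_le_coe_iff]
      rw [inner_sub_right, real_inner_comm w y, real_inner_comm z y] at hw
      linarith
  · exact le_iSup_of_le (f := fun w => (((⟪w, y⟫ : ℝ) : EReal) - f w)) z (by simp [hz])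

theorem ERealConvex.prox_three_point {E : Type*} [NormedAddCommGroup E] [InnerProductSpace ℝ E]
    {g : E → EReal} (hg : ERealConvex g) {S : Set E} (hS : Convex ℝ S) {c a b : ℝ}
    {v x₀ x₁ : E} (hx₀ : x₀ ∈ S) (hx₁ : x₁ ∈ S) (ha : g x₀ = a) (hb : g x₁ = b)
    (hmin : ∀ w ∈ S, g x₁ + ((c * ‖x₁ - v‖ ^ 2 : ℝ) : EReal)
      ≤ g w + ((c * ‖w - v‖ ^ 2 : ℝ) : EReal)) :
    b + c * ‖x₁ - v‖ ^ 2 + c * ‖x₀ - x₁‖ ^ 2 ≤ a + c * ‖x₀ - v‖ ^ 2 := by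
  set X := ⟪x₁ - v, x₀ - x₁⟫
  set D := ‖x₀ - x₁‖ ^ 2
  have hseg : ∀ t ∈ Ioc (0 : ℝ) 1, b ≤ a + 2 * c * X + t * (c * D) := by
    rintro t ⟨ht₀, ht₁⟩
    have hw : (1 - t) • x₁ + t • x₀ ∈ S := hS hx₁ hx₀ (by linarith) ht₀.le (by ring)
    have hconv : g ((1 - t) • x₁ + t • x₀) ≤ (((1 - t) * b + t * a : ℝ) : EReal) := by
      simpa [ha, hb] using hg x₁ x₀ (1 - t) t (by linarith) ht₀.le (by ring)
    have hreal : b + c * ‖x₁ - v‖ ^ 2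
        ≤ (1 - t) * b + t * a + c * ‖(x₁ - v) + t • (x₀ - x₁)‖ ^ 2 := by
      rw [show (x₁ - v) + t • (x₀ - x₁) = (1 - t) • x₁ + t • x₀ - v by module]
      have := (hmin _ hw).trans (add_le_add_left hconv _)
      rw [hb] at this
      exact_mod_cast this
    rw [norm_add_sq_real, real_inner_smul_right, norm_smul, Real.norm_of_nonneg ht₀.le] at hreal
    refine le_of_mul_le_mul_left ?_ ht₀
    nlinarith
  have hvar : b ≤ a + 2 * c * X := by
    have hlim : Tendsto (fun t : ℝ => a + 2 * c * X + t * (c * D)) (𝓝[>] 0)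
        (𝓝 (a + 2 * c * X)) := by
      have hcont : Continuous fun t : ℝ => a + 2 * c * X + t * (c * D) := by fun_prop
      simpa using (hcont.tendsto 0).mono_left nhdsWithin_le_nhds
    exact ge_of_tendsto hlim (by filter_upwards [Ioc_mem_nhdsGT one_pos] using hseg)
  have hexp : ‖x₀ - v‖ ^ 2 = ‖x₁ - v‖ ^ 2 + 2 * X + D := by
    rw [← norm_add_sq_real, sub_add_sub_cancel']
  rw [hexp]
  linear_combination hvar

theorem ERealConvex.forward_backward_step {E : Type*} [NormedAddCommGroup E]
    [InnerProductSpace ℝ E] {g : E → EReal} (hg : ERealConvex g) {S : Set E} (hS : Convex ℝ S)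
    {δ a b : ℝ} (hδ : δ ≠ 0) {u G x₀ x₁ : E} (hx₀ : x₀ ∈ S) (hx₁ : x₁ ∈ S)
    (ha : g x₀ = a) (hb : g x₁ = b)
    (hmin : ∀ w ∈ S, g x₁ + (((2 * δ)⁻¹ * ‖x₁ - u + δ • G‖ ^ 2 : ℝ) : EReal)
      ≤ g w + (((2 * δ)⁻¹ * ‖w - u + δ • G‖ ^ 2 : ℝ) : EReal)) :
    b + ⟪G, x₁ - x₀⟫ + (2 * δ)⁻¹ * ‖x₁ - u‖ ^ 2 + (2 * δ)⁻¹ * ‖x₁ - x₀‖ ^ 2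
      ≤ a + (2 * δ)⁻¹ * ‖x₀ - u‖ ^ 2 := by
  have hshift : ∀ w, w - u + δ • G = w - (u - δ • G) := fun w => by abel
  have h3 := hg.prox_three_point hS hx₀ hx₁ ha hb (by simpa only [hshift] using hmin)
  have hexp : ∀ w, ‖w - (u - δ • G)‖ ^ 2
      = ‖w - u‖ ^ 2 + 2 * δ * ⟪G, w - u⟫ + δ ^ 2 * ‖G‖ ^ 2 := by
    intro w
    rw [← hshift, norm_add_sq_real, real_inner_smul_right, norm_smul, mul_pow, Real.norm_eq_abs,
      sq_abs, real_inner_comm]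
    ring
  have hinner : ⟪G, x₁ - x₀⟫ = ⟪G, x₁ - u⟫ - ⟪G, x₀ - u⟫ := by
    rw [← inner_sub_right, sub_sub_sub_cancel_right]
  have hinv : (2 * δ)⁻¹ * (2 * δ) = 1 := inv_mul_cancel₀ (mul_ne_zero two_ne_zero hδ)
  rw [hexp, hexp, norm_sub_rev x₀] at h3
  rw [hinner]
  linear_combination h3 - (⟪G, x₁ - u⟫ - ⟪G, x₀ - u⟫) * hinv

theorem Convex.le_add_inner_add_sq_of_lipschitz_gradient {E : Type*} [NormedAddCommGroup E]
    [InnerProductSpace ℝ E] [CompleteSpace E] {s : Set E} (hs : Convex ℝ s) {h : E → ℝ}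
    {gh : E → E} {L : ℝ} (hgrad : ∀ z ∈ s, HasGradientAt h (gh z) z)
    (hlip : ∀ z ∈ s, ∀ w ∈ s, ‖gh z - gh w‖ ≤ L * ‖z - w‖) {x y : E} (hx : x ∈ s) (hy : y ∈ s) :
    h y ≤ h x + ⟪gh x, y - x⟫ + L / 2 * ‖y - x‖ ^ 2 := by
  set d := y - x
  have hseg : ∀ t ∈ Icc (0 : ℝ) 1, x + t • d ∈ s := fun t ht => by
    rw [show x + t • d = (1 - t) • x + t • y by module]
    exact hs hx hy (sub_nonneg.2 ht.2) ht.1 (sub_add_cancel 1 t)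
  have hderiv : ∀ t ∈ Icc (0 : ℝ) 1,
      HasDerivAt (fun t : ℝ => h (x + t • d) - t * ⟪gh x, d⟫ - L / 2 * t ^ 2 * ‖d‖ ^ 2)
        (⟪gh (x + t • d), d⟫ - ⟪gh x, d⟫ - L * t * ‖d‖ ^ 2) t := by
    intro t ht
    have hline : HasDerivAt (fun t : ℝ => x + t • d) d t := by
      simpa using ((hasDerivAt_id t).smul_const d).const_add x
    have hcomp : HasDerivAt (fun t : ℝ => h (x + t • d)) ⟪gh (x + t • d), d⟫ t := by
      simpa [InnerProductSpace.toDual_apply_apply, Function.comp_def] using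
        (hgrad _ (hseg t ht)).hasFDerivAt.comp_hasDerivAt t hline
    have hquad := ((hasDerivAt_pow 2 t).const_mul (L / 2)).mul_const (‖d‖ ^ 2)
    exact ((hcomp.sub ((hasDerivAt_id t).mul_const ⟪gh x, d⟫)).sub hquad).congr_deriv
      (by push_cast; ring)
  have hanti : AntitoneOn
      (fun t : ℝ => h (x + t • d) - t * ⟪gh x, d⟫ - L / 2 * t ^ 2 * ‖d‖ ^ 2) (Icc 0 1) := by
    refine antitoneOn_of_hasDerivWithinAt_nonpos (convex_Icc 0 1)
      (fun t ht => (hderiv t ht).continuousAt.continuousWithinAt)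
      (fun t ht => (hderiv t (interior_subset ht)).hasDerivWithinAt) fun t ht => ?_
    rw [interior_Icc] at ht
    have hlip_t : ‖gh (x + t • d) - gh x‖ ≤ L * t * ‖d‖ := by
      simpa [norm_smul, abs_of_pos ht.1, mul_assoc] using
        hlip _ (hseg t (Ioo_subset_Icc_self ht)) _ hx
    have hcs := real_inner_le_norm (gh (x + t • d) - gh x) d
    rw [inner_sub_left] at hcs
    nlinarith [mul_le_mul_of_nonneg_right hlip_t (norm_nonneg d)]
  have h01 := hanti (left_mem_Icc.2 zero_le_one) (right_mem_Icc.2 zero_le_one) zero_le_one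
  norm_num [d] at h01
  linarith

theorem stmt1_general {n p : ℕ}
    (S : Set (EuclideanSpace ℝ (Fin n)))
    (g : EuclideanSpace ℝ (Fin n) → EReal)
    (h : EuclideanSpace ℝ (Fin n) → ℝ)
    (gh : EuclideanSpace ℝ (Fin n) → EuclideanSpace ℝ (Fin n))
    (f : EuclideanSpace ℝ (Fin p) → EReal)
    (K : EuclideanSpace ℝ (Fin n) →ₗ[ℝ] EuclideanSpace ℝ (Fin p))
    (L δ : ℝ)
    (hSconv : Convex ℝ S)
    (hgP : ERealProper g) (hgconv : ERealConvex g)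
    (hfP : ERealProper f)
    (hhC1 : ∃ O : Set (EuclideanSpace ℝ (Fin n)), IsOpen O ∧ S ⊆ O ∧
      (∀ z ∈ O, HasGradientAt h (gh z) z) ∧
      (∀ z ∈ O, ∀ w ∈ O, ‖gh z - gh w‖ ≤ L * ‖z - w‖))
    (hKS : ∀ z ∈ S, K z ∈ interior (edom f))
    (hδ : 0 < δ)
    (x u : ℕ → EuclideanSpace ℝ (Fin n)) (y : ℕ → EuclideanSpace ℝ (Fin p)) (θ : ℕ → ℝ)
    (hxS : ∀ k, x k ∈ S ∧ g (x k) ≠ ⊤)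
    (hy : ∀ k, y (k+1) ∈ csubdiff f (K (x k)))
    (hxmin : ∀ k, ∀ w ∈ S,
      g (x (k+1)) + (((2*δ)⁻¹ * ‖x (k+1) - u k + δ • gh (x k)
          - (θ k * δ) • (LinearMap.adjoint K) (y (k+1))‖ ^ 2 : ℝ) : EReal)
        ≤ g w + (((2*δ)⁻¹ * ‖w - u k + δ • gh (x k)
          - (θ k * δ) • (LinearMap.adjoint K) (y (k+1))‖ ^ 2 : ℝ) : EReal))
    :
    ∀ k : ℕ,
      phiF S g h δ (x (k+1)) (u k)
        + ((θ k : ℝ) : EReal) * (f (K (x k))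
            - (((⟪K (x (k+1)), y (k+1)⟫ : ℝ) : EReal) - econj f (y (k+1))))
      ≤ phiF S g h δ (x k) (u k)
        - ((((1 / δ - L) / 2) * ‖x (k+1) - x k‖ ^ 2 : ℝ) : EReal) := by
  intro k
  obtain ⟨O, -, hSO, hgrad, hlip⟩ := hhC1
  obtain ⟨hx₀, hgx₀⟩ := hxS k
  obtain ⟨hx₁, hgx₁⟩ := hxS (k + 1)
  have hmin := hxmin k
  set A := LinearMap.adjoint K (y (k + 1))
  obtain ⟨a, ha⟩ : ∃ a : ℝ, g (x k) = a := ⟨_, (EReal.coe_toReal hgx₀ (hgP.1 _)).symm⟩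
  obtain ⟨b, hb⟩ : ∃ b : ℝ, g (x (k + 1)) = b := ⟨_, (EReal.coe_toReal hgx₁ (hgP.1 _)).symm⟩
  obtain ⟨F, hF⟩ : ∃ F : ℝ, f (K (x k)) = F :=
    ⟨_, (EReal.coe_toReal (interior_subset (hKS _ hx₀)) (hfP.1 _)).symm⟩
  have hstep := hgconv.forward_backward_step hSconv hδ.ne' hx₀ hx₁ ha hb
    (G := gh (x k) - θ k • A) (u := u k) (by
      simpa only [show ∀ w, w - u k + δ • gh (x k) - (θ k * δ) • A
        = w - u k + δ • (gh (x k) - θ k • A) from fun w => by module] using hmin)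
  have hdesc := hSconv.le_add_inner_add_sq_of_lipschitz_gradient
    (fun z hz => hgrad z (hSO hz)) (fun z hz w hw => hlip z (hSO hz) w (hSO hw)) hx₀ hx₁
  have hadj : ⟪A, x (k + 1) - x k⟫ = ⟪K (x (k + 1)), y (k + 1)⟫ - ⟪K (x k), y (k + 1)⟫ := by
    rw [LinearMap.adjoint_inner_left, map_sub, inner_sub_right, real_inner_comm,
      real_inner_comm (K (x k))]
  rw [inner_sub_left, real_inner_smul_left, hadj] at hstep
  simp only [phiF, if_pos hx₀, if_pos hx₁, add_zero, ha, hb, hF,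
    econj_eq_of_mem_csubdiff hF (hy k)]
  norm_cast
  have hcoef : (1 / δ - L) / 2 = (2 * δ)⁻¹ - L / 2 := by field_simp
  rw [hcoef]
  linear_combination hstep + hdesc

theorem stmt1 {n p : ℕ}
    (S : Set (EuclideanSpace ℝ (Fin n)))
    (g : EuclideanSpace ℝ (Fin n) → EReal)
    (h : EuclideanSpace ℝ (Fin n) → ℝ)
    (gh : EuclideanSpace ℝ (Fin n) → EuclideanSpace ℝ (Fin n))
    (f : EuclideanSpace ℝ (Fin p) → EReal)
    (K : EuclideanSpace ℝ (Fin n) →ₗ[ℝ] EuclideanSpace ℝ (Fin p))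
    (L δ : ℝ)
    (hS : S.Nonempty) (hSconv : Convex ℝ S) (hScomp : IsCompact S)
    (hgP : ERealProper g) (hgconv : ERealConvex g) (hglsc : LowerSemicontinuous g)
    (hfP : ERealProper f) (hfconv : ERealConvex f) (hflsc : LowerSemicontinuous f)
    (hL : 0 < L)
    (hhC1 : ∃ O : Set (EuclideanSpace ℝ (Fin n)), IsOpen O ∧ S ⊆ O ∧
      (∀ z ∈ O, HasGradientAt h (gh z) z) ∧
      (∀ z ∈ O, ∀ w ∈ O, ‖gh z - gh w‖ ≤ L * ‖z - w‖))
    (hKS : ∀ z ∈ S, K z ∈ interior (edom f))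
    (hfpos : ∀ z ∈ S, (0 : EReal) < f (K z))
    (hghnn : ∀ z ∈ S, (0 : EReal) ≤ g z + ((h z : ℝ) : EReal))
    (hSg : ∃ z ∈ S, g z ≠ ⊤)
    (hδ : 0 < δ) (hδL : δ < 1 / L)
    (σ : ℝ) (hσ : 0 < σ) (hσ2 : σ < 2)
    (x u : ℕ → EuclideanSpace ℝ (Fin n)) (y : ℕ → EuclideanSpace ℝ (Fin p)) (θ : ℕ → ℝ)
    (hxS : ∀ k, x k ∈ S ∧ g (x k) ≠ ⊤)
    (hy : ∀ k, y (k+1) ∈ csubdiff f (K (x k)))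
    (hxmin : ∀ k, ∀ w ∈ S,
      g (x (k+1)) + (((2*δ)⁻¹ * ‖x (k+1) - u k + δ • gh (x k)
          - (θ k * δ) • (LinearMap.adjoint K) (y (k+1))‖ ^ 2 : ℝ) : EReal)
        ≤ g w + (((2*δ)⁻¹ * ‖w - u k + δ • gh (x k)
          - (θ k * δ) • (LinearMap.adjoint K) (y (k+1))‖ ^ 2 : ℝ) : EReal))
    (hu : ∀ k, u (k+1) = (1 - σ) • u k + σ • x (k+1))
    (hθ : ∀ k, (θ k : EReal) = varthetaF S g h f K δ (x k) (u k))
    (hθnn : ∀ k, 0 ≤ θ k)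
    :
    ∀ k : ℕ,
      phiF S g h δ (x (k+1)) (u k)
        + ((θ k : ℝ) : EReal) * (f (K (x k))
            - (((⟪K (x (k+1)), y (k+1)⟫ : ℝ) : EReal) - econj f (y (k+1))))
      ≤ phiF S g h δ (x k) (u k)
        - ((((1 / δ - L) / 2) * ‖x (k+1) - x k‖ ^ 2 : ℝ) : EReal) :=
  stmt1_general S g h gh f K L δ hSconv hgP hgconv hfP hhC1 hKS hδ x u y θ hxS hy hxmin
end
end

section
/- (Theorem 3.2) Let the sequences (xᵏ, yᵏ, uᵏ, θ_k) be generated by the FPSA iteration. Then for every k, φ(xᵏ⁺¹, uᵏ⁺¹) − θ_k·f(Kxᵏ⁺¹) ≤ −ϱ₁‖xᵏ − xᵏ⁺¹‖² − ϱ₂‖uᵏ − uᵏ⁺¹‖². -/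
open Filter Metric Set RealInnerProductSpace
open scoped Topology Classical

noncomputable section

/-!
The proof adds three inequalities: the three-point inequality of the proximal step (the objective
`g + ‖· - m‖² / (2δ)` is `1/δ`-strongly convex on `S`, so its minimiser `xᵏ⁺¹` beats `xᵏ` by
`‖xᵏ⁺¹ - xᵏ‖² / (2δ)`), the descent lemma for `h`, and the subgradient inequality for `f` at
`Kxᵏ`, weighted by `θ_k ≥ 0`. Since `θ_k f(Kxᵏ) = φ(xᵏ, uᵏ)`, the linear terms cancel, and the
relaxation `uᵏ⁺¹ = (1 - σ)uᵏ + σxᵏ⁺¹` splits `‖xᵏ⁺¹ - uᵏ‖²` between `‖xᵏ⁺¹ - uᵏ⁺¹‖²` and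
`‖uᵏ - uᵏ⁺¹‖²`.
-/

section InnerProductSpace

variable {E : Type*} [NormedAddCommGroup E] [InnerProductSpace ℝ E]

lemma StrongConvexOn.add_sq_le_of_isMinOn {s : Set E} {F : E → ℝ} {μ : ℝ} {x z : E}
    (hF : StrongConvexOn s μ F) (hmin : IsMinOn F s x) (hx : x ∈ s) (hz : z ∈ s) :
    F x + μ / 2 * ‖x - z‖ ^ 2 ≤ F z := by
  set D := μ / 2 * ‖x - z‖ ^ 2
  have hstep : ∀ l ∈ Ioo (0 : ℝ) 1, F x + (1 - l) * D ≤ F z := by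
    rintro l ⟨hl0, hl1⟩
    have hcomb := hF.2 hx hz (by linarith : 0 ≤ 1 - l) hl0.le (by ring)
    have hmin' : F x ≤ F ((1 - l) • x + l • z) :=
      hmin (hF.1 hx hz (by linarith : 0 ≤ 1 - l) hl0.le (by ring))
    simp only [smul_eq_mul] at hcomb
    have : l * (F x + (1 - l) * D) ≤ l * F z := by linear_combination hmin' + hcomb
    exact le_of_mul_le_mul_left this hl0
  have hlim : Tendsto (fun l : ℝ => F x + (1 - l) * D) (𝓝[>] 0) (𝓝 (F x + D)) :=
    tendsto_nhdsWithin_of_tendsto_nhds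
      ((by fun_prop : Continuous fun l : ℝ => F x + (1 - l) * D).tendsto' 0 _ (by ring))
  exact le_of_tendsto hlim (Filter.eventually_of_mem (Ioo_mem_nhdsGT zero_lt_one) hstep)

lemma ConvexOn.strongConvexOn_add_mul_norm_sub_sq {s : Set E} {G : E → ℝ} (hG : ConvexOn ℝ s G)
    (c : ℝ) (m : E) : StrongConvexOn s (2 * c) (fun w => G w + c * ‖w - m‖ ^ 2) := by
  rw [strongConvexOn_iff_convex]
  have haff : ConvexOn ℝ s (fun w => -(2 * c) * ⟪m, w⟫ + c * ‖m‖ ^ 2) :=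
    ((-(2 * c) • innerₛₗ ℝ m).convexOn hG.1).add_const _
  refine (hG.add haff).congr fun w _ => ?_
  rw [Pi.add_apply, norm_sub_sq_real, real_inner_comm]
  ring

lemma ERealConvex.convexOn_toReal {g : E → EReal} (hg : ERealConvex g) (hbot : ∀ x, g x ≠ ⊥) :
    ConvexOn ℝ (edom g) (fun x => (g x).toReal) := by
  have hcomb : ∀ x ∈ edom g, ∀ y ∈ edom g, ∀ a b : ℝ, 0 ≤ a → 0 ≤ b → a + b = 1 →
      g (a • x + b • y) ≤ ((a * (g x).toReal + b * (g y).toReal : ℝ) : EReal) := by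
    intro x hx y hy a b ha hb hab
    have := hg x y a b ha hb hab
    rwa [← EReal.coe_toReal hx (hbot x), ← EReal.coe_toReal hy (hbot y), ← EReal.coe_mul,
      ← EReal.coe_mul, ← EReal.coe_add] at this
  refine ⟨fun x hx y hy a b ha hb hab => ?_, fun x hx y hy a b ha hb hab => ?_⟩
  · exact ne_top_of_le_ne_top (EReal.coe_ne_top _) (hcomb x hx y hy a b ha hb hab)
  · have := EReal.toReal_le_toReal (hcomb x hx y hy a b ha hb hab) (hbot _) (EReal.coe_ne_top _)
    rwa [EReal.toReal_coe] at this

lemma ERealConvex.toReal_add_mul_norm_sub_sq_le_of_isMinOn {g : E → EReal} (hg : ERealConvex g)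
    (hbot : ∀ x, g x ≠ ⊥) {S : Set E} (hS : Convex ℝ S) {c : ℝ} {m x z : E}
    (hx : x ∈ S) (hxg : g x ≠ ⊤)
    (hmin : ∀ w ∈ S, g x + ((c * ‖x - m‖ ^ 2 : ℝ) : EReal) ≤ g w + ((c * ‖w - m‖ ^ 2 : ℝ) : EReal))
    (hz : z ∈ S) (hzg : g z ≠ ⊤) :
    (g x).toReal + c * ‖x - m‖ ^ 2 + c * ‖x - z‖ ^ 2 ≤ (g z).toReal + c * ‖z - m‖ ^ 2 := by
  have hconv : StrongConvexOn (S ∩ edom g) (2 * c) (fun w => (g w).toReal + c * ‖w - m‖ ^ 2) :=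
    ((hg.convexOn_toReal hbot).subset inter_subset_right
      (hS.inter (hg.convexOn_toReal hbot).1)).strongConvexOn_add_mul_norm_sub_sq c m
  have hisMin : IsMinOn (fun w => (g w).toReal + c * ‖w - m‖ ^ 2) (S ∩ edom g) x := by
    rintro w ⟨hwS, hwg⟩
    have := hmin w hwS
    rw [← EReal.coe_toReal hxg (hbot x), ← EReal.coe_toReal hwg (hbot w)] at this
    exact_mod_cast this
  have := hconv.add_sq_le_of_isMinOn hisMin ⟨hx, hxg⟩ ⟨hz, hzg⟩
  linarith

lemma ERealConvex.toReal_add_inner_le_of_isMinOn {g : E → EReal} (hg : ERealConvex g)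
    (hbot : ∀ x, g x ≠ ⊥) {S : Set E} (hS : Convex ℝ S) {δ : ℝ} (hδ : δ ≠ 0) {q u x z : E}
    (hx : x ∈ S) (hxg : g x ≠ ⊤)
    (hmin : ∀ w ∈ S, g x + (((2 * δ)⁻¹ * ‖x - u + δ • q‖ ^ 2 : ℝ) : EReal)
      ≤ g w + (((2 * δ)⁻¹ * ‖w - u + δ • q‖ ^ 2 : ℝ) : EReal))
    (hz : z ∈ S) (hzg : g z ≠ ⊤) :
    (g x).toReal + ⟪q, x - z⟫ + (2 * δ)⁻¹ * (‖x - u‖ ^ 2 + ‖x - z‖ ^ 2)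
      ≤ (g z).toReal + (2 * δ)⁻¹ * ‖z - u‖ ^ 2 := by
  have hshift : ∀ w : E, w - u + δ • q = w - (u - δ • q) := fun w => by abel
  simp only [hshift] at hmin
  have key := hg.toReal_add_mul_norm_sub_sq_le_of_isMinOn hbot hS hx hxg hmin hz hzg
  have hexpand : ∀ w : E, (2 * δ)⁻¹ * ‖w - (u - δ • q)‖ ^ 2
      = (2 * δ)⁻¹ * ‖w - u‖ ^ 2 + ⟪q, w⟫ - ⟪q, u⟫ + δ / 2 * ‖q‖ ^ 2 := by
    intro w
    rw [← hshift, norm_add_sq_real, inner_smul_right, norm_smul, Real.norm_eq_abs, mul_pow,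
      sq_abs, real_inner_comm, inner_sub_right]
    field_simp
    ring
  rw [hexpand, hexpand] at key
  rw [inner_sub_right]
  linarith

lemma Convex.le_add_inner_add_sq_of_hasGradientAt [CompleteSpace E] {s : Set E} (hs : Convex ℝ s) {h : E → ℝ}
    {gh : E → E} {L : ℝ} {a b : E} (ha : a ∈ s) (hb : b ∈ s)
    (hgrad : ∀ z ∈ s, HasGradientAt h (gh z) z) (hlip : ∀ z ∈ s, ‖gh z - gh a‖ ≤ L * ‖z - a‖) :
    h b ≤ h a + ⟪gh a, b - a⟫ + L / 2 * ‖b - a‖ ^ 2 := by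
  set d := b - a
  set ψ : ℝ → ℝ := fun t => h (a + t • d) - t * ⟪gh a, d⟫ - L / 2 * t ^ 2 * ‖d‖ ^ 2
  have hmem : ∀ t ∈ Icc (0 : ℝ) 1, a + t • d ∈ s := fun t ht => hs.add_smul_sub_mem ha hb ht
  have hderiv : ∀ t ∈ Icc (0 : ℝ) 1,
      HasDerivAt ψ (⟪gh (a + t • d) - gh a, d⟫ - L * t * ‖d‖ ^ 2) t := by
    intro t ht
    have hline : HasDerivAt (fun r : ℝ => a + r • d) d t := by
      simpa using ((hasDerivAt_id t).smul_const d).const_add a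
    have hcomp : HasDerivAt (fun r => h (a + r • d)) ⟪gh (a + t • d), d⟫ t := by
      have := (hgrad _ (hmem t ht)).hasFDerivAt.comp_hasDerivAt t hline
      exact this
    refine ((hcomp.sub ((hasDerivAt_id t).mul_const ⟪gh a, d⟫)).sub
      (((hasDerivAt_pow 2 t).const_mul (L / 2)).mul_const (‖d‖ ^ 2))).congr_deriv ?_
    rw [inner_sub_left]
    ring
  have hnonpos : ∀ t ∈ Icc (0 : ℝ) 1, ⟪gh (a + t • d) - gh a, d⟫ - L * t * ‖d‖ ^ 2 ≤ 0 := by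
    intro t ht
    have hdist : ‖gh (a + t • d) - gh a‖ ≤ L * (t * ‖d‖) := by
      simpa [norm_smul, abs_of_nonneg ht.1] using hlip _ (hmem t ht)
    calc ⟪gh (a + t • d) - gh a, d⟫ - L * t * ‖d‖ ^ 2
        ≤ ‖gh (a + t • d) - gh a‖ * ‖d‖ - L * t * ‖d‖ ^ 2 := by
          gcongr; exact real_inner_le_norm _ _
      _ ≤ L * (t * ‖d‖) * ‖d‖ - L * t * ‖d‖ ^ 2 := by gcongr
      _ = 0 := by ring
  have hanti : AntitoneOn ψ (Icc 0 1) :=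
    antitoneOn_of_hasDerivWithinAt_nonpos (convex_Icc 0 1)
      (fun t ht => (hderiv t ht).continuousAt.continuousWithinAt)
      (fun t ht => (hderiv t (interior_subset ht)).hasDerivWithinAt)
      (fun t ht => hnonpos t (interior_subset ht))
  have := hanti (left_mem_Icc.2 zero_le_one) (right_mem_Icc.2 zero_le_one) zero_le_one
  have hend : a + d = b := add_sub_cancel a b
  norm_num [ψ, hend] at this
  linarith

lemma toReal_add_inner_le_of_mem_csubdiff {f : E → EReal} {v z w : E} (hv : v ∈ csubdiff f z)
    (hz : f z ≠ ⊤) (hz' : f z ≠ ⊥) (hw : f w ≠ ⊤) :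
    (f z).toReal + ⟪v, w - z⟫ ≤ (f w).toReal := by
  have := hv w
  rw [← EReal.coe_toReal hz hz', ← EReal.coe_add] at this
  have := EReal.toReal_le_toReal this (EReal.coe_ne_bot _) hw
  rwa [EReal.toReal_coe] at this

lemma fpsa_merit_step {x₀ x₁ u₀ u₁ d₀ a : E} {G₀ G₁ h₀ h₁ F₀ F₁ θ δ L σ : ℝ}
    (hδ : δ ≠ 0) (hσ : σ ≠ 0) (hθ : 0 ≤ θ)
    (hθF : θ * F₀ = G₀ + h₀ + (2 * δ)⁻¹ * ‖x₀ - u₀‖ ^ 2)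
    (hsub : F₀ + ⟪a, x₁ - x₀⟫ ≤ F₁)
    (hdesc : h₁ ≤ h₀ + ⟪d₀, x₁ - x₀⟫ + L / 2 * ‖x₁ - x₀‖ ^ 2)
    (hprox : G₁ + ⟪d₀ - θ • a, x₁ - x₀⟫ + (2 * δ)⁻¹ * (‖x₁ - u₀‖ ^ 2 + ‖x₁ - x₀‖ ^ 2)
      ≤ G₀ + (2 * δ)⁻¹ * ‖x₀ - u₀‖ ^ 2)
    (hu : u₁ = (1 - σ) • u₀ + σ • x₁) :
    G₁ + h₁ + (2 * δ)⁻¹ * ‖x₁ - u₁‖ ^ 2 - θ * F₁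
      ≤ -((1 - δ * L) / (2 * δ) * ‖x₀ - x₁‖ ^ 2)
        - ((1 - (1 - σ) ^ 2) / (2 * σ ^ 2 * δ) * ‖u₀ - u₁‖ ^ 2) := by
  have hx₁u₁ : ‖x₁ - u₁‖ ^ 2 = (1 - σ) ^ 2 * ‖x₁ - u₀‖ ^ 2 := by
    rw [hu, show x₁ - ((1 - σ) • u₀ + σ • x₁) = (1 - σ) • (x₁ - u₀) by module, norm_smul,
      mul_pow, Real.norm_eq_abs, sq_abs]
  have hu₀u₁ : (1 - (1 - σ) ^ 2) / (2 * σ ^ 2 * δ) * ‖u₀ - u₁‖ ^ 2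
      = (2 * δ)⁻¹ * (1 - (1 - σ) ^ 2) * ‖x₁ - u₀‖ ^ 2 := by
    rw [hu, show u₀ - ((1 - σ) • u₀ + σ • x₁) = σ • (u₀ - x₁) by module, norm_smul,
      mul_pow, Real.norm_eq_abs, sq_abs, norm_sub_rev]
    field_simp
  have hx₀x₁ : (1 - δ * L) / (2 * δ) * ‖x₀ - x₁‖ ^ 2 = ((2 * δ)⁻¹ - L / 2) * ‖x₁ - x₀‖ ^ 2 := by
    rw [norm_sub_rev]
    field_simp
  have hθsub : θ * F₀ + θ * ⟪a, x₁ - x₀⟫ ≤ θ * F₁ := by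
    rw [← mul_add]; exact mul_le_mul_of_nonneg_left hsub hθ
  rw [inner_sub_left, real_inner_smul_left] at hprox
  rw [hx₁u₁, hu₀u₁, hx₀x₁]
  linarith

end InnerProductSpace

section FPSA

variable {n p : ℕ} {S : Set (EuclideanSpace ℝ (Fin n))} {g : EuclideanSpace ℝ (Fin n) → EReal}
  (h : EuclideanSpace ℝ (Fin n) → ℝ) (δ : ℝ) {x : EuclideanSpace ℝ (Fin n)}
  (u : EuclideanSpace ℝ (Fin n))

lemma phiF_eq_coe_of_mem (hx : x ∈ S) (hxg : g x ≠ ⊤) (hxg' : g x ≠ ⊥) :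
    phiF S g h δ x u = (((g x).toReal + h x + (2 * δ)⁻¹ * ‖x - u‖ ^ 2 : ℝ) : EReal) := by
  rw [phiF, if_pos hx, add_zero, ← EReal.coe_toReal hxg hxg']
  norm_cast

lemma mul_toReal_eq_of_coe_eq_varthetaF {f : EuclideanSpace ℝ (Fin p) → EReal}
    {K : EuclideanSpace ℝ (Fin n) →ₗ[ℝ] EuclideanSpace ℝ (Fin p)} {θ : ℝ}
    (hx : x ∈ S) (hxg : g x ≠ ⊤) (hxg' : g x ≠ ⊥) (hf : 0 < f (K x)) (hf' : f (K x) ≠ ⊤)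
    (hθ : (θ : EReal) = varthetaF S g h f K δ x u) :
    θ * (f (K x)).toReal = (g x).toReal + h x + (2 * δ)⁻¹ * ‖x - u‖ ^ 2 := by
  obtain ⟨F, hF⟩ : ∃ F : ℝ, f (K x) = F := ⟨_, (EReal.coe_toReal hf' (ne_bot_of_gt hf)).symm⟩
  rw [hF, EReal.coe_pos] at hf
  rw [varthetaF, phiF_eq_coe_of_mem h δ u hx hxg hxg', hF, ← EReal.coe_div,
    EReal.coe_eq_coe_iff] at hθ
  rw [hθ, hF, EReal.toReal_coe, div_mul_cancel₀ _ hf.ne']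

end FPSA

theorem stmt4_general {n p : ℕ}
    (S : Set (EuclideanSpace ℝ (Fin n)))
    (g : EuclideanSpace ℝ (Fin n) → EReal)
    (h : EuclideanSpace ℝ (Fin n) → ℝ)
    (gh : EuclideanSpace ℝ (Fin n) → EuclideanSpace ℝ (Fin n))
    (f : EuclideanSpace ℝ (Fin p) → EReal)
    (K : EuclideanSpace ℝ (Fin n) →ₗ[ℝ] EuclideanSpace ℝ (Fin p))
    (L δ : ℝ)
    (hSconv : Convex ℝ S)
    (hgP : ERealProper g) (hgconv : ERealConvex g)
    (hfP : ERealProper f)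
    (hhC1 : ∃ O : Set (EuclideanSpace ℝ (Fin n)), IsOpen O ∧ S ⊆ O ∧
      (∀ z ∈ O, HasGradientAt h (gh z) z) ∧
      (∀ z ∈ O, ∀ w ∈ O, ‖gh z - gh w‖ ≤ L * ‖z - w‖))
    (hKS : ∀ z ∈ S, K z ∈ interior (edom f))
    (hfpos : ∀ z ∈ S, (0 : EReal) < f (K z))
    (hδ : 0 < δ)
    (σ : ℝ) (hσ : 0 < σ)
    (x u : ℕ → EuclideanSpace ℝ (Fin n)) (y : ℕ → EuclideanSpace ℝ (Fin p)) (θ : ℕ → ℝ)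
    (hxS : ∀ k, x k ∈ S ∧ g (x k) ≠ ⊤)
    (hy : ∀ k, y (k+1) ∈ csubdiff f (K (x k)))
    (hxmin : ∀ k, ∀ w ∈ S,
      g (x (k+1)) + (((2*δ)⁻¹ * ‖x (k+1) - u k + δ • gh (x k)
          - (θ k * δ) • (LinearMap.adjoint K) (y (k+1))‖ ^ 2 : ℝ) : EReal)
        ≤ g w + (((2*δ)⁻¹ * ‖w - u k + δ • gh (x k)
          - (θ k * δ) • (LinearMap.adjoint K) (y (k+1))‖ ^ 2 : ℝ) : EReal))
    (hu : ∀ k, u (k+1) = (1 - σ) • u k + σ • x (k+1))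
    (hθ : ∀ k, (θ k : EReal) = varthetaF S g h f K δ (x k) (u k))
    (hθnn : ∀ k, 0 ≤ θ k)
    :
    ∀ k : ℕ,
      phiF S g h δ (x (k+1)) (u (k+1)) - ((θ k : ℝ) : EReal) * f (K (x (k+1)))
      ≤ -((((1 - δ * L) / (2 * δ)) * ‖x k - x (k+1)‖ ^ 2 : ℝ) : EReal)
        - ((((1 - (1 - σ) ^ 2) / (2 * σ ^ 2 * δ)) * ‖u k - u (k+1)‖ ^ 2 : ℝ) : EReal) := by
  intro k
  obtain ⟨O, -, hSO, hgrad, hlip⟩ := hhC1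
  obtain ⟨hx₀S, hx₀g⟩ := hxS k
  obtain ⟨hx₁S, hx₁g⟩ := hxS (k + 1)
  have hfin : ∀ z ∈ S, f (K z) ≠ ⊤ := fun z hz => interior_subset (hKS z hz)
  have hθF := mul_toReal_eq_of_coe_eq_varthetaF h δ (u k) hx₀S hx₀g (hgP.1 _) (hfpos _ hx₀S)
    (hfin _ hx₀S) (hθ k)
  have hsub : (f (K (x k))).toReal + ⟪LinearMap.adjoint K (y (k + 1)), x (k + 1) - x k⟫
      ≤ (f (K (x (k + 1)))).toReal := by
    rw [LinearMap.adjoint_inner_left, map_sub]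
    exact toReal_add_inner_le_of_mem_csubdiff (hy k) (hfin _ hx₀S) (hfP.1 _) (hfin _ hx₁S)
  have hdesc := hSconv.le_add_inner_add_sq_of_hasGradientAt hx₀S hx₁S
    (fun z hz => hgrad z (hSO hz)) (fun z hz => hlip z (hSO hz) _ (hSO hx₀S))
  have hshape : ∀ w, w - u k + δ • gh (x k) - (θ k * δ) • LinearMap.adjoint K (y (k + 1))
      = w - u k + δ • (gh (x k) - θ k • LinearMap.adjoint K (y (k + 1))) := fun w => by module
  have hprox := hgconv.toReal_add_inner_le_of_isMinOn hgP.1 hSconv hδ.ne' hx₁S hx₁g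
    (fun w hw => by simpa only [hshape] using hxmin k w hw) hx₀S hx₀g
  rw [phiF_eq_coe_of_mem h δ _ hx₁S hx₁g (hgP.1 _), ← EReal.coe_toReal (hfin _ hx₁S) (hfP.1 _)]
  exact_mod_cast fpsa_merit_step hδ.ne' hσ.ne' (hθnn k) hθF hsub hdesc hprox (hu k)

theorem stmt4 {n p : ℕ}
    (S : Set (EuclideanSpace ℝ (Fin n)))
    (g : EuclideanSpace ℝ (Fin n) → EReal)
    (h : EuclideanSpace ℝ (Fin n) → ℝ)
    (gh : EuclideanSpace ℝ (Fin n) → EuclideanSpace ℝ (Fin n))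
    (f : EuclideanSpace ℝ (Fin p) → EReal)
    (K : EuclideanSpace ℝ (Fin n) →ₗ[ℝ] EuclideanSpace ℝ (Fin p))
    (L δ : ℝ)
    (hS : S.Nonempty) (hSconv : Convex ℝ S) (hScomp : IsCompact S)
    (hgP : ERealProper g) (hgconv : ERealConvex g) (hglsc : LowerSemicontinuous g)
    (hfP : ERealProper f) (hfconv : ERealConvex f) (hflsc : LowerSemicontinuous f)
    (hL : 0 < L)
    (hhC1 : ∃ O : Set (EuclideanSpace ℝ (Fin n)), IsOpen O ∧ S ⊆ O ∧
      (∀ z ∈ O, HasGradientAt h (gh z) z) ∧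
      (∀ z ∈ O, ∀ w ∈ O, ‖gh z - gh w‖ ≤ L * ‖z - w‖))
    (hKS : ∀ z ∈ S, K z ∈ interior (edom f))
    (hfpos : ∀ z ∈ S, (0 : EReal) < f (K z))
    (hghnn : ∀ z ∈ S, (0 : EReal) ≤ g z + ((h z : ℝ) : EReal))
    (hSg : ∃ z ∈ S, g z ≠ ⊤)
    (hδ : 0 < δ) (hδL : δ < 1 / L)
    (σ : ℝ) (hσ : 0 < σ) (hσ2 : σ < 2)
    (x u : ℕ → EuclideanSpace ℝ (Fin n)) (y : ℕ → EuclideanSpace ℝ (Fin p)) (θ : ℕ → ℝ)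
    (hxS : ∀ k, x k ∈ S ∧ g (x k) ≠ ⊤)
    (hy : ∀ k, y (k+1) ∈ csubdiff f (K (x k)))
    (hxmin : ∀ k, ∀ w ∈ S,
      g (x (k+1)) + (((2*δ)⁻¹ * ‖x (k+1) - u k + δ • gh (x k)
          - (θ k * δ) • (LinearMap.adjoint K) (y (k+1))‖ ^ 2 : ℝ) : EReal)
        ≤ g w + (((2*δ)⁻¹ * ‖w - u k + δ • gh (x k)
          - (θ k * δ) • (LinearMap.adjoint K) (y (k+1))‖ ^ 2 : ℝ) : EReal))
    (hu : ∀ k, u (k+1) = (1 - σ) • u k + σ • x (k+1))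
    (hθ : ∀ k, (θ k : EReal) = varthetaF S g h f K δ (x k) (u k))
    (hθnn : ∀ k, 0 ≤ θ k)
    :
    ∀ k : ℕ,
      phiF S g h δ (x (k+1)) (u (k+1)) - ((θ k : ℝ) : EReal) * f (K (x (k+1)))
      ≤ -((((1 - δ * L) / (2 * δ)) * ‖x k - x (k+1)‖ ^ 2 : ℝ) : EReal)
        - ((((1 - (1 - σ) ^ 2) / (2 * σ ^ 2 * δ)) * ‖u k - u (k+1)‖ ^ 2 : ℝ) : EReal) :=
  stmt4_general S g h gh f K L δ hSconv hgP hgconv hfP hhC1 hKS hfpos hδ σ hσ x u y θ hxS hy hxmin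
    hu hθ hθnn
end
end
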